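/- (Lewandowski–Szynal inequality.) Let $\alpha \geq -1/2$, $x \geq 0$, and $n \in \mathbb{Z}_{\geq 0}$. Then $\left|L_n^{(\alpha)}(x)\right| \leq \dfrac{(\alpha+1)_n}{n!}\,\sigma_n^{(\alpha)}(e^x)$, where $\sigma_n^{(\alpha)}(e^x) := \dfrac{n!}{(\alpha+1)_n}\sum_{m=0}^{n}\dfrac{(\alpha+1)_{n-m}}{(n-m)!}\dfrac{x^m}{m!}$; equivalently, $\left|L_n^{(\alpha)}(x)\right| \leq \sum_{m=0}^{n}\dfrac{(\alpha+1)_{n-m}}{(n-m)!}\dfrac{x^m}{m!}$. -/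

import Mathlib

open scoped BigOperators
open MeasureTheory

/-- The rising factorial (Pochhammer symbol) `(a)_m = a (a+1) ⋯ (a+m-1)`. -/
noncomputable def risingFactorial (a : ℝ) (m : ℕ) : ℝ := (ascPochhammer ℝ m).eval a

/-- The classical Laguerre polynomial `L_n^{(α)}(x)`. -/
noncomputable def laguerreP (n : ℕ) (α : ℝ) (x : ℝ) : ℝ :=
  risingFactorial (α + 1) n / (Nat.factorial n : ℝ) *
    ∑ j ∈ Finset.range (n + 1),
      risingFactorial (-(n : ℝ)) j / risingFactorial (α + 1) j * x ^ j / (Nat.factorial j : ℝ)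

/-- Erdélyi's multivariate Laguerre polynomial `L_{n_1,…,n_k}^{(α)}(x_1,…,x_k)`. -/
noncomputable def mvLaguerre (k : ℕ) (α : ℝ) (n : Fin k → ℕ) (x : Fin k → ℝ) : ℝ :=
  risingFactorial (α + 1) (∑ i, n i) / (∏ i, (Nat.factorial (n i) : ℝ)) *
    ∑ j ∈ Fintype.piFinset (fun i => Finset.range (n i + 1)),
      (∏ i, risingFactorial (-(n i : ℝ)) (j i)) / risingFactorial (α + 1) (∑ i, j i) *
        ∏ i, x i ^ (j i) / (Nat.factorial (j i) : ℝ)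

/-- The confluent Lauricella function `Φ₂^{(k)}[b₁,…,b_k; c; x₁,…,x_k]`. -/
noncomputable def Phi2 (k : ℕ) (b : Fin k → ℝ) (c : ℝ) (x : Fin k → ℝ) : ℝ :=
  ∑' j : Fin k → ℕ,
    (∏ i, risingFactorial (b i) (j i)) / risingFactorial c (∑ i, j i) *
      ∏ i, x i ^ (j i) / (Nat.factorial (j i) : ℝ)

/-- The confluent hypergeometric function `₁F₁[a; c; x]`. -/
noncomputable def oneF1 (a c x : ℝ) : ℝ :=
  ∑' j : ℕ, risingFactorial a j / risingFactorial c j * x ^ j / (Nat.factorial j : ℝ)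

/-- Rooney's constant `q_n = √((2n)!) / (2^{n+1/2} n!)`. -/
noncomputable def qSeq (n : ℕ) : ℝ :=
  Real.sqrt (Nat.factorial (2 * n) : ℝ) /
    ((2 : ℝ) ^ ((n : ℝ) + 1 / 2) * (Nat.factorial n : ℝ))

/-- The open standard simplex `E_k ⊆ ℝ^k`. -/
def simplexE (k : ℕ) : Set (Fin k → ℝ) := {u | (∀ i, 0 < u i) ∧ ∑ i, u i < 1}

/-- The density of the Dirichlet measure `μ_{(b₁,…,b_k,β)}` with respect to
Lebesgue measure on the simplex `E_k`. -/
noncomputable def dirichletDensity (k : ℕ) (b : Fin k → ℝ) (β : ℝ) (u : Fin k → ℝ) : ℝ :=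
  Real.Gamma (∑ i, b i + β) / ((∏ i, Real.Gamma (b i)) * Real.Gamma β) *
    (∏ i, u i ^ (b i - 1)) * (1 - ∑ i, u i) ^ (β - 1)

/-!
For `α = -1/2`, the explicit expansion of `L_n^{(-1/2)}` and the moments
`∫₀^∞ e^{-u} u^{-1/2} u^k du = Γ(1/2) (1/2)_k` give
`n! Γ(1/2) L_n^{(-1/2)}(x) = ∫₀^∞ e^{-u} u^{-1/2} Re((√u + i√x)^{2n}) du`.
Since `|Re z^{2n}| ≤ |z|^{2n} = (u + x)^n`, this is bounded by the same integral of `(u + x)^n`,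
which is `n! Γ(1/2)` times the majorant. For `α ≥ -1/2`, Chu–Vandermonde gives the connection
formula `L_n^{(α)} = ∑_k (α + 1/2)_{n-k} / (n-k)! L_k^{(-1/2)}`, whose coefficients are
nonnegative, and the majorants satisfy the same relation.
-/

open Finset Real MeasureTheory
open scoped Nat

theorem risingFactorial_zero (a : ℝ) : risingFactorial a 0 = 1 := by
  simp [risingFactorial]

theorem risingFactorial_succ (a : ℝ) (k : ℕ) :
    risingFactorial a (k + 1) = risingFactorial a k * (a + k) :=
  ascPochhammer_succ_eval k a

theorem risingFactorial_add (a : ℝ) (m k : ℕ) :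
    risingFactorial a (m + k) = risingFactorial a m * risingFactorial (a + m) k := by
  simpa [risingFactorial, Polynomial.eval_comp] using
    congrArg (Polynomial.eval a) (ascPochhammer_mul ℝ m k).symm

theorem risingFactorial_pos {a : ℝ} (ha : 0 < a) (k : ℕ) : 0 < risingFactorial a k :=
  ascPochhammer_pos k a ha

theorem risingFactorial_nonneg {a : ℝ} (ha : 0 ≤ a) (k : ℕ) : 0 ≤ risingFactorial a k := by
  induction k with
  | zero => simp [risingFactorial_zero]
  | succ k ih => rw [risingFactorial_succ]; positivity

theorem risingFactorial_neg_natCast (n j : ℕ) :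
    risingFactorial (-(n : ℝ)) j = (-1) ^ j * n.descFactorial j := by
  rw [risingFactorial, ascPochhammer_eval_neg_eq_descPochhammer,
    descPochhammer_eval_eq_descFactorial]

theorem risingFactorial_eq_negOnePow_smul (a : ℝ) (k : ℕ) :
    risingFactorial a k = Int.negOnePow k • (descPochhammer ℤ k).smeval (-a) := by
  rw [risingFactorial, ← Polynomial.ascPochhammer_smeval_eq_eval,
    ← Polynomial.ascPochhammer_smeval_neg_eq_descPochhammer, neg_neg]

theorem risingFactorial_add_div_factorial (a b : ℝ) (N : ℕ) :
    risingFactorial (a + b) N / N ! =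
      ∑ ij ∈ antidiagonal N,
        risingFactorial a ij.1 / ij.1 ! * (risingFactorial b ij.2 / ij.2 !) := by
  rw [risingFactorial_eq_negOnePow_smul, neg_add,
    Ring.descPochhammer_smeval_add _ (Commute.all _ _), smul_sum, sum_div]
  refine sum_congr rfl fun ⟨i, j⟩ hij => ?_
  rw [HasAntidiagonal.mem_antidiagonal] at hij
  subst hij
  rw [risingFactorial_eq_negOnePow_smul, risingFactorial_eq_negOnePow_smul,
    Nat.cast_choose ℝ (Nat.le_add_right i j), Nat.add_sub_cancel_left]
  simp only [Units.smul_def, zsmul_eq_mul, Nat.cast_add, Int.negOnePow_add, Units.val_mul,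
    Int.cast_mul]
  field_simp

theorem laguerreP_eq_sum {α : ℝ} (hα : -1 < α) (n : ℕ) (x : ℝ) :
    laguerreP n α x = ∑ m ∈ range (n + 1),
      risingFactorial (α + 1 + m) (n - m) / (n - m)! * ((-1) ^ m * (x ^ m / m !)) := by
  rw [laguerreP, mul_sum]
  refine sum_congr rfl fun m hm => ?_
  have hmn : m ≤ n := Nat.lt_succ_iff.mp (mem_range.mp hm)
  have hsplit := risingFactorial_add (α + 1) m (n - m)
  rw [Nat.add_sub_cancel' hmn] at hsplit
  have hfac : ((n - m)! : ℝ) * n.descFactorial m = n ! := by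
    exact_mod_cast Nat.factorial_mul_descFactorial hmn
  have hpos := risingFactorial_pos (show 0 < α + 1 by linarith) m
  have hdesc : (0 : ℝ) < n.descFactorial m := Nat.cast_pos.mpr (Nat.descFactorial_pos.mpr hmn)
  rw [hsplit, risingFactorial_neg_natCast, ← hfac]
  field_simp

theorem sum_risingFactorial_div_mul_sum (b : ℝ) (a w : ℕ → ℝ) (n : ℕ) :
    ∑ k ∈ range (n + 1), risingFactorial b (n - k) / (n - k)! *
        ∑ m ∈ range (k + 1), risingFactorial (a m) (k - m) / (k - m)! * w m =
      ∑ m ∈ range (n + 1), risingFactorial (a m + b) (n - m) / (n - m)! * w m := by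
  simp_rw [mul_sum]
  rw [sum_comm' (s' := fun m => Ico m (n + 1)) (t' := range (n + 1)) (fun k m => by
    simp only [mem_range, mem_Ico]; omega)]
  refine sum_congr rfl fun m hm => ?_
  have hmn : m ≤ n := Nat.lt_succ_iff.mp (mem_range.mp hm)
  rw [sum_Ico_eq_sum_range, show n + 1 - m = n - m + 1 by omega,
    risingFactorial_add_div_factorial, Nat.sum_antidiagonal_eq_sum_range_succ
      (fun i j => risingFactorial (a m) i / i ! * (risingFactorial b j / j !)), sum_mul]
  refine sum_congr rfl fun i _ => ?_
  rw [Nat.add_sub_cancel_left, show n - (m + i) = n - m - i by omega]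
  ring

/-- In the paper's notation, `(α + 1)_n / n! · σ_n^{(α)}(e^x)`. -/
noncomputable def laguerreMajorant (n : ℕ) (α x : ℝ) : ℝ :=
  ∑ m ∈ Finset.range (n + 1),
    risingFactorial (α + 1) (n - m) / (Nat.factorial (n - m) : ℝ) *
      (x ^ m / (Nat.factorial m : ℝ))

theorem laguerreP_eq_sum_laguerreP {α β : ℝ} (hα : -1 < α) (hβ : -1 < β) (n : ℕ)
    (x : ℝ) :
    laguerreP n α x =
      ∑ k ∈ range (n + 1), risingFactorial (α - β) (n - k) / (n - k)! * laguerreP k β x := by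
  simp_rw [laguerreP_eq_sum hβ, sum_risingFactorial_div_mul_sum, laguerreP_eq_sum hα]
  refine sum_congr rfl fun m _ => ?_
  ring_nf

theorem laguerreMajorant_eq_sum_laguerreMajorant (α β : ℝ) (n : ℕ) (x : ℝ) :
    laguerreMajorant n α x =
      ∑ k ∈ range (n + 1),
        risingFactorial (α - β) (n - k) / (n - k)! * laguerreMajorant k β x := by
  simp only [laguerreMajorant]
  rw [sum_risingFactorial_div_mul_sum (a := fun _ => β + 1)]
  refine sum_congr rfl fun m _ => ?_
  ring_nf

theorem abs_laguerreP_le_laguerreMajorant_of_le {α β x : ℝ} (hβ : -1 < β) (hβα : β ≤ α)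
    (hle : ∀ k, |laguerreP k β x| ≤ laguerreMajorant k β x) (n : ℕ) :
    |laguerreP n α x| ≤ laguerreMajorant n α x := by
  rw [laguerreP_eq_sum_laguerreP (hβ.trans_le hβα) hβ,
    laguerreMajorant_eq_sum_laguerreMajorant α β]
  refine (abs_sum_le_sum_abs _ _).trans (sum_le_sum fun k _ => ?_)
  have hc : 0 ≤ risingFactorial (α - β) (n - k) / (n - k)! :=
    div_nonneg (risingFactorial_nonneg (sub_nonneg.mpr hβα) _) (Nat.cast_nonneg _)
  rw [abs_mul, abs_of_nonneg hc]
  exact mul_le_mul_of_nonneg_left (hle k) hc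

theorem Gamma_add_natCast_eq_mul_risingFactorial {s : ℝ} (hs : 0 < s) (k : ℕ) :
    Gamma (s + k) = Gamma s * risingFactorial s k := by
  induction k with
  | zero => simp [risingFactorial_zero]
  | succ k ih =>
    rw [Nat.cast_succ, ← add_assoc, Gamma_add_one (by positivity), ih, risingFactorial_succ]
    ring

theorem exp_neg_mul_rpow_mul_pow_eqOn (s : ℝ) (k : ℕ) :
    Set.EqOn (fun u => exp (-u) * u ^ (s - 1) * u ^ k)
      (fun u => exp (-u) * u ^ (s + k - 1)) (Set.Ioi 0) := fun u hu => by
  simp only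
  rw [mul_assoc, ← rpow_natCast, ← rpow_add hu, sub_add_eq_add_sub]

theorem integrableOn_exp_neg_mul_rpow_mul_pow {s : ℝ} (hs : 0 < s) (k : ℕ) :
    IntegrableOn (fun u => exp (-u) * u ^ (s - 1) * u ^ k) (Set.Ioi 0) :=
  (GammaIntegral_convergent (by positivity : 0 < s + k)).congr_fun
    (exp_neg_mul_rpow_mul_pow_eqOn s k).symm measurableSet_Ioi

theorem integral_exp_neg_mul_rpow_mul_pow {s : ℝ} (hs : 0 < s) (k : ℕ) :
    ∫ u in Set.Ioi 0, exp (-u) * u ^ (s - 1) * u ^ k = Gamma s * risingFactorial s k := by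
  rw [← Gamma_add_natCast_eq_mul_risingFactorial hs, Gamma_eq_integral (by positivity)]
  exact setIntegral_congr_fun measurableSet_Ioi (exp_neg_mul_rpow_mul_pow_eqOn s k)

section PolynomialMoments

variable {ι : Type*} {s : ℝ} (t : Finset ι) (c : ι → ℝ) (d : ι → ℕ)

theorem integrableOn_exp_neg_mul_rpow_mul_sum (hs : 0 < s) :
    IntegrableOn (fun u => exp (-u) * u ^ (s - 1) * ∑ i ∈ t, c i * u ^ d i) (Set.Ioi 0) := by
  simp_rw [mul_sum, mul_left_comm _ (c _)]
  exact integrable_finsetSum _ fun i _ =>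
    (integrableOn_exp_neg_mul_rpow_mul_pow hs (d i)).const_mul (c i)

theorem integral_exp_neg_mul_rpow_mul_sum (hs : 0 < s) :
    ∫ u in Set.Ioi 0, exp (-u) * u ^ (s - 1) * ∑ i ∈ t, c i * u ^ d i =
      Gamma s * ∑ i ∈ t, c i * risingFactorial s (d i) := by
  simp_rw [mul_sum, mul_left_comm _ (c _)]
  rw [integral_finsetSum _ fun i _ =>
    (integrableOn_exp_neg_mul_rpow_mul_pow hs (d i)).const_mul (c i)]
  simp_rw [integral_const_mul, integral_exp_neg_mul_rpow_mul_pow hs]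

end PolynomialMoments

theorem sum_range_two_mul_add_one_eq_sum_even {M : Type*} [AddCommMonoid M] {f : ℕ → M}
    (hf : ∀ j, f (2 * j + 1) = 0) (n : ℕ) :
    ∑ k ∈ range (2 * n + 1), f k = ∑ j ∈ range (n + 1), f (2 * j) := by
  induction n with
  | zero => simp
  | succ n ih =>
    rw [show 2 * (n + 1) + 1 = 2 * n + 1 + 1 + 1 by ring, sum_range_succ, sum_range_succ, ih,
      hf, add_zero, sum_range_succ (n := n + 1)]
    rfl

theorem re_add_mul_I_pow_two_mul (a b : ℝ) (n : ℕ) :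
    ((a + b * Complex.I) ^ (2 * n)).re =
      ∑ m ∈ range (n + 1),
        (-1) ^ m * ((2 * n).choose (2 * m) : ℝ) * (b ^ 2) ^ m * (a ^ 2) ^ (n - m) := by
  rw [add_comm, add_pow, Complex.re_sum, sum_range_two_mul_add_one_eq_sum_even]
  · refine sum_congr rfl fun m _ => ?_
    have hsub : 2 * n - 2 * m = 2 * (n - m) := by omega
    have hterm : ((b : ℂ) * Complex.I) ^ (2 * m) * (a : ℂ) ^ (2 * n - 2 * m) *
          ((2 * n).choose (2 * m) : ℂ) =
        (((-1) ^ m * ((2 * n).choose (2 * m) : ℝ) * (b ^ 2) ^ m * (a ^ 2) ^ (n - m) : ℝ) :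
          ℂ) := by
      rw [hsub, mul_pow, pow_mul Complex.I, Complex.I_sq]
      push_cast
      ring
    rw [hterm, Complex.ofReal_re]
  · intro j
    have hterm : ((b : ℂ) * Complex.I) ^ (2 * j + 1) * (a : ℂ) ^ (2 * n - (2 * j + 1)) *
          ((2 * n).choose (2 * j + 1) : ℂ) =
        (((-1) ^ j * b ^ (2 * j + 1) * a ^ (2 * n - (2 * j + 1)) *
          ((2 * n).choose (2 * j + 1) : ℝ) : ℝ) : ℂ) * Complex.I := by
      rw [mul_pow, pow_succ Complex.I, pow_mul Complex.I, Complex.I_sq]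
      push_cast
      ring
    rw [hterm, Complex.mul_I_re, Complex.ofReal_im, neg_zero]

theorem abs_sum_neg_one_pow_choose_two_mul_le {u x : ℝ} (hu : 0 ≤ u) (hx : 0 ≤ x) (n : ℕ) :
    |∑ m ∈ range (n + 1), (-1) ^ m * ((2 * n).choose (2 * m) : ℝ) * x ^ m * u ^ (n - m)| ≤
      (u + x) ^ n := by
  obtain ⟨a, rfl⟩ : ∃ a, u = a ^ 2 := ⟨√u, (sq_sqrt hu).symm⟩
  obtain ⟨b, rfl⟩ : ∃ b, x = b ^ 2 := ⟨√x, (sq_sqrt hx).symm⟩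
  rw [← re_add_mul_I_pow_two_mul]
  calc _ ≤ ‖((a : ℂ) + b * Complex.I) ^ (2 * n)‖ := Complex.abs_re_le_norm _
    _ = (a ^ 2 + b ^ 2) ^ n := by
      rw [norm_pow, pow_mul, Complex.sq_norm, Complex.normSq_add_mul_I]

theorem risingFactorial_one_half (k : ℕ) :
    risingFactorial (1 / 2) k = (2 * k)! / (4 ^ k * k !) := by
  induction k with
  | zero => simp [risingFactorial_zero]
  | succ k ih =>
    rw [risingFactorial_succ, ih, show 2 * (k + 1) = 2 * k + 1 + 1 by ring, Nat.factorial_succ,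
      Nat.factorial_succ, Nat.factorial_succ]
    push_cast
    field_simp
    ring

theorem factorial_mul_laguerreP_neg_half (n : ℕ) (x : ℝ) :
    n ! * laguerreP n (-(1 / 2)) x =
      ∑ m ∈ range (n + 1),
        (-1) ^ m * ((2 * n).choose (2 * m) : ℝ) * x ^ m * risingFactorial (1 / 2) (n - m) := by
  rw [laguerreP_eq_sum (by norm_num), mul_sum]
  refine sum_congr rfl fun m hm => ?_
  have hmn : m ≤ n := Nat.lt_succ_iff.mp (mem_range.mp hm)
  have hsplit := risingFactorial_add (1 / 2) m (n - m)
  rw [Nat.add_sub_cancel' hmn] at hsplit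
  have hpos := risingFactorial_pos (show (0 : ℝ) < 1 / 2 by norm_num) m
  have hquot : risingFactorial (1 / 2 + m) (n - m) =
      risingFactorial (1 / 2) n / risingFactorial (1 / 2) m := by
    rw [hsplit]
    field_simp
  rw [show -(1 / 2 : ℝ) + 1 + m = 1 / 2 + m by ring, hquot,
    Nat.cast_choose ℝ (by omega : 2 * m ≤ 2 * n), show 2 * n - 2 * m = 2 * (n - m) by omega,
    risingFactorial_one_half, risingFactorial_one_half, risingFactorial_one_half,
    show (4 : ℝ) ^ n = 4 ^ m * 4 ^ (n - m) by rw [← pow_add, Nat.add_sub_cancel' hmn]]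
  field_simp

theorem factorial_mul_laguerreMajorant (n : ℕ) (α x : ℝ) :
    n ! * laguerreMajorant n α x =
      ∑ m ∈ range (n + 1), (n.choose m : ℝ) * x ^ m * risingFactorial (α + 1) (n - m) := by
  rw [laguerreMajorant, mul_sum]
  refine sum_congr rfl fun m hm => ?_
  rw [Nat.cast_choose ℝ (Nat.lt_succ_iff.mp (mem_range.mp hm))]
  field_simp

theorem abs_laguerreP_neg_half_le {x : ℝ} (hx : 0 ≤ x) (n : ℕ) :
    |laguerreP n (-(1 / 2)) x| ≤ laguerreMajorant n (-(1 / 2)) x := by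
  have hs : (0 : ℝ) < 1 / 2 := by norm_num
  have hL : Gamma (1 / 2) * (n ! * laguerreP n (-(1 / 2)) x) =
      ∫ u in Set.Ioi 0, exp (-u) * u ^ ((1 / 2 : ℝ) - 1) *
        ∑ m ∈ range (n + 1),
          (-1) ^ m * ((2 * n).choose (2 * m) : ℝ) * x ^ m * u ^ (n - m) := by
    rw [integral_exp_neg_mul_rpow_mul_sum _ _ _ hs, factorial_mul_laguerreP_neg_half]
  have hS : Gamma (1 / 2) * (n ! * laguerreMajorant n (-(1 / 2)) x) =
      ∫ u in Set.Ioi 0, exp (-u) * u ^ ((1 / 2 : ℝ) - 1) *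
        ∑ m ∈ range (n + 1), (n.choose m : ℝ) * x ^ m * u ^ (n - m) := by
    rw [integral_exp_neg_mul_rpow_mul_sum _ _ _ hs, factorial_mul_laguerreMajorant]
    norm_num
  have hpoint : ∀ u ∈ Set.Ioi (0 : ℝ),
      ‖exp (-u) * u ^ ((1 / 2 : ℝ) - 1) *
        ∑ m ∈ range (n + 1),
          (-1) ^ m * ((2 * n).choose (2 * m) : ℝ) * x ^ m * u ^ (n - m)‖ ≤
      exp (-u) * u ^ ((1 / 2 : ℝ) - 1) *
        ∑ m ∈ range (n + 1), (n.choose m : ℝ) * x ^ m * u ^ (n - m) := by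
    intro u (hu : 0 < u)
    have hw : 0 ≤ exp (-u) * u ^ ((1 / 2 : ℝ) - 1) := by positivity
    rw [Real.norm_eq_abs, abs_mul, abs_of_nonneg hw]
    refine mul_le_mul_of_nonneg_left ?_ hw
    calc _ ≤ (u + x) ^ n := abs_sum_neg_one_pow_choose_two_mul_le hu.le hx n
      _ = _ := by
        rw [add_comm, add_pow]
        exact sum_congr rfl fun m _ => by ring
  have hint := norm_integral_le_of_norm_le (integrableOn_exp_neg_mul_rpow_mul_sum _ _ _ hs)
    ((ae_restrict_iff' measurableSet_Ioi).mpr (ae_of_all _ hpoint))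
  rw [← hL, ← hS, Real.norm_eq_abs, abs_mul, abs_mul, abs_of_pos (Gamma_pos_of_pos hs),
    Nat.abs_cast] at hint
  have hpos : 0 < Gamma (1 / 2) * n ! := mul_pos (Gamma_pos_of_pos hs) (by positivity)
  rw [← mul_assoc, ← mul_assoc] at hint
  exact le_of_mul_le_mul_left hint hpos

/-- The Lewandowski–Szynal inequality for Laguerre polynomials. -/
theorem lewandowski_szynal_inequality (α : ℝ) (hα : -(1 / 2) ≤ α) (x : ℝ) (hx : 0 ≤ x)
    (n : ℕ) :
    |laguerreP n α x| ≤
        risingFactorial (α + 1) n / (Nat.factorial n : ℝ) *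
          ((Nat.factorial n : ℝ) / risingFactorial (α + 1) n *
            ∑ m ∈ Finset.range (n + 1),
              risingFactorial (α + 1) (n - m) / (Nat.factorial (n - m) : ℝ) *
                (x ^ m / (Nat.factorial m : ℝ))) ∧
      |laguerreP n α x| ≤
        ∑ m ∈ Finset.range (n + 1),
          risingFactorial (α + 1) (n - m) / (Nat.factorial (n - m) : ℝ) *
            (x ^ m / (Nat.factorial m : ℝ)) := by
  have hbound : |laguerreP n α x| ≤ laguerreMajorant n α x :=
    abs_laguerreP_le_laguerreMajorant_of_le (by norm_num) hα (abs_laguerreP_neg_half_le hx) n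
  have hrf : risingFactorial (α + 1) n ≠ 0 := (risingFactorial_pos (by linarith) n).ne'
  refine ⟨?_, hbound⟩
  calc _ ≤ laguerreMajorant n α x := hbound
    _ = _ := by
      rw [laguerreMajorant]
      field_simp
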